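/- arXiv:2008.11343 — 2 statements merged into one kernel-verified Lean document; each statement's English description precedes it below -/
import Mathlib

section
/- Let E be a real normed vector space, β ∈ [0,1), and let (g_t)_{t≥0} be a sequence in E. Define m_t = (1-β) Σ_{s=0}^{t} β^{t-s} g_s for each t ≥ 0. Then for every T ≥ 0, Σ_{t=0}^{T} ‖m_t‖² ≤ Σ_{s=0}^{T} ‖g_s‖². -/
/-!
Each `m_t` is a combination of `g_0, …, g_t` with nonnegative weights `(1-β)β^{t-s}` of total
mass `1 - β^{t+1} ≤ 1`, so convexity of `‖·‖²` gives `‖m_t‖² ≤ (1-β) ∑_s β^{t-s} ‖g_s‖²`.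
Summing over `t ≤ T` and exchanging the sums, each `‖g_s‖²` picks up the total weight
`(1-β) ∑_{k < T+1-s} β^k ≤ 1`.
-/

open Finset

theorem norm_sum_smul_sq_le_of_sum_le_one {ι E : Type*} [NormedAddCommGroup E]
    [NormedSpace ℝ E] (s : Finset ι) (w : ι → ℝ) (v : ι → E) (hw : ∀ i ∈ s, 0 ≤ w i)
    (hw1 : ∑ i ∈ s, w i ≤ 1) :
    ‖∑ i ∈ s, w i • v i‖ ^ 2 ≤ ∑ i ∈ s, w i * ‖v i‖ ^ 2 := by
  have htri : ‖∑ i ∈ s, w i • v i‖ ≤ ∑ i ∈ s, w i * ‖v i‖ :=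
    (norm_sum_le _ _).trans_eq <| sum_congr rfl fun i hi => by
      rw [norm_smul, Real.norm_of_nonneg (hw i hi)]
  have hnn : 0 ≤ ∑ i ∈ s, w i * ‖v i‖ ^ 2 :=
    sum_nonneg fun i hi => mul_nonneg (hw i hi) (sq_nonneg _)
  calc ‖∑ i ∈ s, w i • v i‖ ^ 2 ≤ (∑ i ∈ s, w i * ‖v i‖) ^ 2 :=
        pow_le_pow_left₀ (norm_nonneg _) htri 2
    _ ≤ (∑ i ∈ s, w i) * ∑ i ∈ s, w i * ‖v i‖ ^ 2 :=
        sum_sq_le_sum_mul_sum_of_sq_le_mul s hw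
          (fun i hi => mul_nonneg (hw i hi) (sq_nonneg _)) fun i _ => (by ring : _ = _).le
    _ ≤ ∑ i ∈ s, w i * ‖v i‖ ^ 2 := mul_le_of_le_one_left hnn hw1

theorem one_sub_mul_geom_sum_le_one {β : ℝ} (hβ0 : 0 ≤ β) (n : ℕ) :
    (1 - β) * ∑ k ∈ range n, β ^ k ≤ 1 := by
  rw [mul_neg_geom_sum]
  exact sub_le_self _ (pow_nonneg hβ0 n)

noncomputable def ema {M : Type*} [AddCommMonoid M] [Module ℝ M] (β : ℝ) (g : ℕ → M) (t : ℕ) :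
    M :=
  (1 - β) • ∑ s ∈ range (t + 1), β ^ (t - s) • g s

theorem ema_eq_sum_smul {M : Type*} [AddCommMonoid M] [Module ℝ M] (β : ℝ) (g : ℕ → M)
    (t : ℕ) : ema β g t = ∑ s ∈ range (t + 1), ((1 - β) * β ^ (t - s)) • g s := by
  simp only [ema, smul_sum, smul_smul]

theorem norm_ema_sq_le {E : Type*} [NormedAddCommGroup E] [NormedSpace ℝ E] {β : ℝ}
    (hβ0 : 0 ≤ β) (hβ1 : β ≤ 1) (g : ℕ → E) (t : ℕ) :
    ‖ema β g t‖ ^ 2 ≤ ema β (fun s => ‖g s‖ ^ 2) t := by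
  have hmass : ∑ s ∈ range (t + 1), (1 - β) * β ^ (t - s) ≤ 1 := by
    have hreflect := sum_range_reflect (β ^ ·) (t + 1)
    simp only [Nat.add_sub_cancel] at hreflect
    rw [← mul_sum, hreflect]
    exact one_sub_mul_geom_sum_le_one hβ0 (t + 1)
  rw [ema_eq_sum_smul, ema_eq_sum_smul]
  exact norm_sum_smul_sq_le_of_sum_le_one _ _ _
    (fun s _ => mul_nonneg (sub_nonneg.2 hβ1) (pow_nonneg hβ0 _)) hmass

theorem sum_range_ema_le {β : ℝ} (hβ0 : 0 ≤ β) (a : ℕ → ℝ) (ha : ∀ s, 0 ≤ a s)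
    (n : ℕ) : ∑ t ∈ range n, ema β a t ≤ ∑ t ∈ range n, a t := by
  calc ∑ t ∈ range n, ema β a t
      = (1 - β) * ∑ t ∈ range n, ∑ s ∈ range (t + 1), β ^ (t - s) * a s := by
        simp only [ema, smul_eq_mul, mul_sum]
    _ = ∑ s ∈ range n, ((1 - β) * ∑ k ∈ range (n - s), β ^ k) * a s := by
        rw [sum_range_diag_flip n fun s k => β ^ k * a s, mul_sum]
        simp only [← sum_mul, mul_assoc]
    _ ≤ ∑ s ∈ range n, a s :=
        sum_le_sum fun s _ => mul_le_of_le_one_left (ha s) (one_sub_mul_geom_sum_le_one hβ0 _)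

/-- Let `E` be a real normed vector space, `β ∈ [0,1)`, and `(g_t)_{t≥0}` a sequence in `E`.
Define `m_t = (1-β) ∑_{s=0}^t β^{t-s} g_s`. Then for every `T ≥ 0`,
`∑_{t=0}^T ‖m_t‖² ≤ ∑_{s=0}^T ‖g_s‖²`. -/
theorem ema_squared_norm_sum_le
    {E : Type*} [NormedAddCommGroup E] [NormedSpace ℝ E]
    (β : ℝ) (hβ0 : 0 ≤ β) (hβ1 : β < 1)
    (g m : ℕ → E)
    (hm : ∀ t, m t = (1 - β) • ∑ s ∈ Finset.range (t + 1), β ^ (t - s) • g s)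
    (T : ℕ) :
    ∑ t ∈ Finset.range (T + 1), ‖m t‖ ^ 2
      ≤ ∑ s ∈ Finset.range (T + 1), ‖g s‖ ^ 2 := by
  obtain rfl : m = ema β g := funext hm
  calc ∑ t ∈ range (T + 1), ‖ema β g t‖ ^ 2
      ≤ ∑ t ∈ range (T + 1), ema β (fun s => ‖g s‖ ^ 2) t :=
        sum_le_sum fun t _ => norm_ema_sq_le hβ0 hβ1.le g t
    _ ≤ ∑ s ∈ range (T + 1), ‖g s‖ ^ 2 :=
        sum_range_ema_le hβ0 _ (fun s => sq_nonneg _) _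
end

section
/- Let E be a real vector space, β ≠ 1 a real number, γ a real number, and let (x_t)_{t≥0}, (m_t)_{t≥0}, (g_t)_{t≥0}, (δ_t)_{t≥0} be sequences in E satisfying, for all t ≥ 0, the updates m_{t+1} = β m_t + (1-β) g_{t+1} + δ_t - δ_{t+1} and x_{t+1} = x_t - γ m_t. Define the auxiliary sequence y_t = x_t - (γ/(1-β)) (m_t + δ_t). Then for every t ≥ 0, y_{t+1} - y_t = -γ g_{t+1}. -/
theorem momentum_add_error_succ_sub {R E : Type*} [CommRing R] [AddCommGroup E] [Module R E]
    (β : R) (m g δ : ℕ → E)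
    (hm : ∀ t, m (t + 1) = β • m t + (1 - β) • g (t + 1) + (δ t - δ (t + 1))) (t : ℕ) :
    (m (t + 1) + δ (t + 1)) - (m t + δ t) = (1 - β) • (g (t + 1) - m t) := by
  rw [hm]
  module

/-- For the error-compensated momentum SGD updates
`m_{t+1} = β m_t + (1-β) g_{t+1} + δ_t - δ_{t+1}` and `x_{t+1} = x_t - γ m_t`,
the auxiliary sequence `y_t = x_t - (γ/(1-β)) (m_t + δ_t)` satisfies
`y_{t+1} - y_t = -γ g_{t+1}` for every `t ≥ 0`. -/
theorem auxiliary_sequence_sgd_step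
    {E : Type*} [AddCommGroup E] [Module ℝ E]
    (β γ : ℝ) (hβ : β ≠ 1)
    (x m g δ : ℕ → E)
    (hm : ∀ t, m (t + 1) = β • m t + (1 - β) • g (t + 1) + (δ t - δ (t + 1)))
    (hx : ∀ t, x (t + 1) = x t - γ • m t)
    (y : ℕ → E)
    (hy : ∀ t, y t = x t - (γ / (1 - β)) • (m t + δ t))
    (t : ℕ) :
    y (t + 1) - y t = -(γ • g (t + 1)) := by
  have h_one_sub : 1 - β ≠ 0 := sub_ne_zero.mpr hβ.symm
  calc y (t + 1) - y t
      = (x (t + 1) - x t) - (γ / (1 - β)) • ((m (t + 1) + δ (t + 1)) - (m t + δ t)) := by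
        rw [hy, hy]
        module
    _ = -(γ • m t) - (γ / (1 - β) * (1 - β)) • (g (t + 1) - m t) := by
        rw [hx, momentum_add_error_succ_sub β m g δ hm, smul_smul]
        module
    _ = -(γ • g (t + 1)) := by
        rw [div_mul_cancel₀ γ h_one_sub]
        module
end
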